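/- arXiv:1307.8347 — 2 statements merged into one kernel-verified Lean document; each statement's English description precedes it below -/
import Mathlib

section
/- If X ⊆ ℝⁿ has a rationally outgoing Bouligand–Severi k-tangent, then k < n. -/
open Filter Topology

noncomputable section

abbrev E (n : ℕ) := EuclideanSpace ℝ (Fin n)

/-- The vertices of the simplex `C_{x,u,λ}`: the `j`-th vertex is
`x + λ₁u₁ + ⋯ + λ_ju_j`. -/
def cVert {n k : ℕ} (x : E n) (u : Fin k → E n) (lam : Fin k → ℝ) (j : Fin (k+1)) : E n :=
  x + ∑ i : Fin k, if (i : ℕ) < (j : ℕ) then lam i • u i else 0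

/-- The simplex `C_{x,u,λ} = conv(x, x+λ₁u₁, …, x+λ₁u₁+⋯+λ_ku_k)`. -/
def cSimplex {n k : ℕ} (x : E n) (u : Fin k → E n) (lam : Fin k → ℝ) : Set (E n) :=
  convexHull ℝ (Set.range (cVert x u lam))

/-- `resid u s v = v - p_{s-1}(v)`, the residue of `v` after orthogonal projection onto
`span(u₁,…,u_{s-1})` (indices below `s`). -/
def resid {n k : ℕ} (u : Fin k → E n) (s : Fin k) (v : E n) : E n :=
  v - (Submodule.orthogonalProjection (Submodule.span ℝ (u '' {j | (j : ℕ) < (s : ℕ)})) v : E n)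

/-- The sequence `z` determines `u` as a Bouligand–Severi `k`-tangent of `X` at `x`. -/
def DeterminesBS {n k : ℕ} (X : Set (E n)) (x : E n) (u : Fin k → E n) (z : ℕ → E n) : Prop :=
  Orthonormal ℝ u ∧ (∀ i, z i ∈ X) ∧ Tendsto z atTop (𝓝 x) ∧
  (∀ i, z i - x ∉ Submodule.span ℝ (Set.range u)) ∧
  ∀ s : Fin k,
    Tendsto (fun i => ‖resid u s (z i - x)‖⁻¹ • resid u s (z i - x)) atTop (𝓝 (u s))

/-- `u` is a Bouligand–Severi `k`-tangent of `X` at `x`. -/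
def IsBSTangent {n k : ℕ} (X : Set (E n)) (x : E n) (u : Fin k → E n) : Prop :=
  ∃ z : ℕ → E n, DeterminesBS X x u z

/-- A point of `ℝⁿ` all of whose coordinates are rational. -/
def RationalPoint {n : ℕ} (v : E n) : Prop := ∀ i, ∃ q : ℚ, v i = (q : ℝ)

/-- `u` is a rationally outgoing Bouligand–Severi `k`-tangent of `X` at `x`:
there are a rational simplex `S = conv(range v)`, a face `F = conv(v '' W)` of `S`, and
`λ ∈ ℝ_{>0}^k` with `C_{x,u,λ} ⊆ S`, `C_{x,u,λ} ⊄ F` and `F ∩ X = S ∩ X`. -/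
def RationallyOutgoing {n k : ℕ} (X : Set (E n)) (x : E n) (u : Fin k → E n) : Prop :=
  IsBSTangent X x u ∧
  ∃ (m : ℕ) (v : Fin (m+1) → E n), AffineIndependent ℝ v ∧ (∀ j, RationalPoint (v j)) ∧
    ∃ (W : Set (Fin (m+1))) (lam : Fin k → ℝ), (∀ i, 0 < lam i) ∧
      cSimplex x u lam ⊆ convexHull ℝ (Set.range v) ∧
      ¬ cSimplex x u lam ⊆ convexHull ℝ (v '' W) ∧
      convexHull ℝ (v '' W) ∩ X = convexHull ℝ (Set.range v) ∩ X

/-- If `X ⊆ ℝⁿ` has a rationally outgoing Bouligand–Severi `k`-tangent,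
then `k < n`. -/
theorem stmt8 {n k : ℕ} (X : Set (E n)) (x : E n) (u : Fin k → E n)
    (h : RationallyOutgoing X x u) : k < n := by
  obtain ⟨⟨z, hon, _, _, hnotin, _⟩, _⟩ := h
  have hli : LinearIndependent ℝ u := hon.linearIndependent
  have hfr : Module.finrank ℝ (E n) = n := by
    simp [finrank_euclideanSpace]
  have hle : k ≤ n := by
    have := hli.fintype_card_le_finrank
    simpa [hfr] using this
  rcases lt_or_eq_of_le hle with hlt | heq
  · exact hlt
  · exfalso
    have hspan : Submodule.span ℝ (Set.range u) = ⊤ :=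
      hli.span_eq_top_of_card_eq_finrank' (by simp [hfr, heq])
    exact hnotin 0 (hspan ▸ Submodule.mem_top)
end
end

section
/- Let T ⊆ ℝⁿ be a simplex, A a 2×n real matrix, b ∈ ℝ², and η(y) = Ay + b on T. Let (zᵢ) be a sequence in T converging to z ∈ T with η(zᵢ) ≠ η(z) for all i. Suppose w₁,...,w_{k} are pairwise orthogonal unit vectors with Aw_j = 0 for j < k, Aw_k ≠ 0, (zᵢ − z − p_{k−1}(zᵢ−z))/‖zᵢ − z − p_{k−1}(zᵢ−z)‖ → w_k, and (η(zᵢ) − η(z))/‖η(zᵢ) − η(z)‖ → u for a unit vector u ∈ ℝ². Then there exists c > 0 with Aw_k = c·u. -/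
open Filter Topology

noncomputable section

/-- With `η(y) = Ay + b` affine on a simplex `T`, a sequence `zᵢ → z` in `T`
with `η(zᵢ) ≠ η(z)`, pairwise orthonormal `w₁,…,w_k` with `Aw_j = 0` for `j < k`, `Aw_k ≠ 0`,
normalized residues converging to `w_k`, and normalized `η`-increments converging to a unit
vector `u ∈ ℝ²`: then `Aw_k = c·u` for some `c > 0`. -/
theorem stmt12 {n m k : ℕ} (v : Fin (m+1) → E n) (hv : AffineIndependent ℝ v)
    (A : E n →ₗ[ℝ] E 2) (b : E 2)
    (z : ℕ → E n) (hzT : ∀ i, z i ∈ convexHull ℝ (Set.range v))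
    (z₀ : E n) (hz₀ : z₀ ∈ convexHull ℝ (Set.range v))
    (hlim : Tendsto z atTop (𝓝 z₀))
    (hne : ∀ i, A (z i) + b ≠ A z₀ + b)
    (hk : 0 < k) (w : Fin k → E n) (hw : Orthonormal ℝ w)
    (hAj : ∀ j : Fin k, (j : ℕ) + 1 < k → A (w j) = 0)
    (hAk : A (w ⟨k - 1, Nat.sub_lt hk one_pos⟩) ≠ 0)
    (hres : Tendsto
      (fun i => ‖resid w ⟨k - 1, Nat.sub_lt hk one_pos⟩ (z i - z₀)‖⁻¹ •
        resid w ⟨k - 1, Nat.sub_lt hk one_pos⟩ (z i - z₀))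
      atTop (𝓝 (w ⟨k - 1, Nat.sub_lt hk one_pos⟩)))
    (u : E 2) (hu : ‖u‖ = 1)
    (hudir : Tendsto
      (fun i => ‖(A (z i) + b) - (A z₀ + b)‖⁻¹ • ((A (z i) + b) - (A z₀ + b)))
      atTop (𝓝 u)) :
    ∃ c : ℝ, 0 < c ∧ A (w ⟨k - 1, Nat.sub_lt hk one_pos⟩) = c • u := by

  set s : Fin k := ⟨k - 1, Nat.sub_lt hk one_pos⟩ with hs
  have hAspan : ∀ x ∈ Submodule.span ℝ (w '' {j | (j : ℕ) < (s : ℕ)}), A x = 0 := by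
    intro x hx
    induction hx using Submodule.span_induction with
    | mem y hy =>
      obtain ⟨j, hj, rfl⟩ := hy
      have hj' : (j : ℕ) < k - 1 := by simpa [hs] using hj
      exact hAj j (by omega)
    | zero => simp
    | add a b _ _ ha hb => simp [ha, hb]
    | smul c a _ ha => simp [ha]
  have hAr : ∀ i, A (resid w s (z i - z₀)) = A (z i - z₀) := by
    intro i
    have h0 := hAspan _ (Submodule.orthogonalProjection (Submodule.span ℝ (w '' {j | (j : ℕ) < (s : ℕ)})) (z i - z₀)).2
    unfold resid
    rw [map_sub, h0, sub_zero]
  have hAz : ∀ i, A (z i - z₀) ≠ 0 := by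
    intro i h
    apply hne i
    have : A (z i) - A z₀ = 0 := by rwa [← map_sub]
    have : A (z i) = A z₀ := by linear_combination (norm := module) this
    rw [this]
  have hrne : ∀ i, resid w s (z i - z₀) ≠ 0 := by
    intro i h
    exact hAz i (by rw [← hAr i, h, map_zero])
  set r : ℕ → E n := fun i => resid w s (z i - z₀) with hr
  set f : ℕ → E n := fun i => ‖r i‖⁻¹ • r i with hf
  have hAcont : Continuous A := A.continuous_of_finiteDimensional
  have hAf : Tendsto (fun i => A (f i)) atTop (𝓝 (A (w s))) :=
    (hAcont.tendsto (w s)).comp hres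
  have hAfval : ∀ i, A (f i) = ‖r i‖⁻¹ • A (z i - z₀) := by
    intro i; simp [hf, hr, map_smul, hAr i]
  have hAznorm : ∀ i, ‖A (z i - z₀)‖ ≠ 0 := fun i => norm_ne_zero_iff.2 (hAz i)
  have hrnorm : ∀ i, ‖r i‖ ≠ 0 := fun i => norm_ne_zero_iff.2 (hrne i)
  set g : ℕ → E 2 := fun i => ‖A (z i - z₀)‖⁻¹ • A (z i - z₀) with hg
  have hgu : Tendsto g atTop (𝓝 u) := by
    have : ∀ i, (A (z i) + b) - (A z₀ + b) = A (z i - z₀) := by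
      intro i; rw [map_sub]; abel
    simpa [hg, this] using hudir
  have hnormAf : Tendsto (fun i => ‖A (f i)‖) atTop (𝓝 ‖A (w s)‖) :=
    (continuous_norm.tendsto _).comp hAf
  have key : ∀ i, A (f i) = ‖A (f i)‖ • g i := by
    intro i
    rw [hAfval i]
    show ‖r i‖⁻¹ • A (z i - z₀) =
      ‖‖r i‖⁻¹ • A (z i - z₀)‖ • (‖A (z i - z₀)‖⁻¹ • A (z i - z₀))
    rw [norm_smul, norm_inv, norm_norm, smul_smul, mul_assoc,
      mul_inv_cancel₀ (hAznorm i), mul_one]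
  have hlim2 : Tendsto (fun i => ‖A (f i)‖ • g i) atTop (𝓝 (‖A (w s)‖ • u)) :=
    hnormAf.smul hgu
  have hEq : A (w s) = ‖A (w s)‖ • u := by
    have := hAf.congr (fun i => key i)
    exact tendsto_nhds_unique this hlim2
  exact ⟨‖A (w s)‖, norm_pos_iff.2 hAk, hEq⟩
end
end
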